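/- Plausibility is modular with respect to union: for ELPs Π_1 and Π_2 and any WVI I over a set A with ex-ats(Π_1) ∪ ex-ats(Π_2) ⊆ A, it holds that I ⊨_p (Π_1 ∪ Π_2) if and only if I ⊨_p Π_1 and I ⊨_p Π_2. -/

import Mathlib

/- Formalization of epistemic logic programs (ELPs), following the paper
   "Utilizing Treewidth for Quantitative Reasoning on Epistemic Logic Programs". -/

namespace ELP

variable {α : Type}

/-- A literal over atoms `α`: an atom together with a polarity
    (`true` = the atom itself, `false` = its classical negation `¬a`). -/
abbrev Lit (α : Type) := α × Bool

/-- A rule of a plain (disjunctive) logic program: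
    `a₁ ∨ … ∨ a_k ← a_{k+1}, …, a_m, ¬a_{m+1}, …, ¬a_n`. -/
structure PRule (α : Type) where
  head : Set α
  bpos : Set α
  bneg : Set α

/-- An interpretation `I` satisfies a rule `r` if `(H_r ∪ B⁻_r) ∩ I ≠ ∅` or `B⁺_r ⊄ I`. -/
def PRule.SatBy (r : PRule α) (I : Set α) : Prop :=
  ((r.head ∪ r.bneg) ∩ I).Nonempty ∨ ¬ r.bpos ⊆ I

/-- `I` is a model of the program `P`. -/
def IsModelOf (I : Set α) (P : Set (PRule α)) : Prop := ∀ r ∈ P, r.SatBy I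

/-- The Gelfond–Lifschitz reduct `P^I`: drop rules whose negative body intersects `I`,
    and delete the negative bodies of the remaining rules. -/
def glReduct (P : Set (PRule α)) (I : Set α) : Set (PRule α) :=
  { r' | ∃ r ∈ P, r.bneg ∩ I = ∅ ∧ r' = ⟨r.head, r.bpos, ∅⟩ }

/-- `I` is an answer set of `P` if it is a ⊆-minimal model of the GL reduct `P^I`. -/
def IsAnswerSet (P : Set (PRule α)) (I : Set α) : Prop :=
  IsModelOf I (glReduct P I) ∧ ∀ J ⊆ I, IsModelOf J (glReduct P I) → J = I

/-- `AS(P)`, the set of answer sets of `P`. -/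
def answerSets (P : Set (PRule α)) : Set (Set α) := { I | IsAnswerSet P I }

/-- A rule of an epistemic logic program (ELP):
    `a₁ ∨ … ∨ a_k ← ℓ_{k+1}, …, ℓ_m, ξ_{m+1}, …, ξ_j, ¬ξ_{j+1}, …, ¬ξ_n`,
    where the objective literals `ℓ_i` are split into positive (`bpos`) and negative
    (`bneg`) body atoms, `epos` are the epistemic literals `not ℓ` occurring positively
    and `eneg` those occurring under classical negation `¬`. -/
structure ERule (α : Type) where
  head : Set α
  bpos : Set α
  bneg : Set α
  epos : Set (Lit α)
  eneg : Set (Lit α)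

/-- `ex-ats(r)`: the atoms occurring in epistemic literals of `r`. -/
def ERule.exats (r : ERule α) : Set α := Prod.fst '' (r.epos ∪ r.eneg)

/-- `ats(r)`: all atoms occurring in `r`. -/
def ERule.ats (r : ERule α) : Set α := r.head ∪ r.bpos ∪ r.bneg ∪ r.exats

/-- `ax-ats(r) = ats(r) \ ex-ats(r)`: the non-epistemic atoms of `r`. -/
def ERule.axats (r : ERule α) : Set α := r.ats \ r.exats

/-- A rule is purely-epistemic if `ax-ats(r) = ∅`. -/
def ERule.PurelyEpistemic (r : ERule α) : Prop := r.axats = ∅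

/-- Well-formedness of an ELP rule, reflecting that in
    `a₁ ∨ … ∨ a_k ← ℓ_{k+1}, …, ℓ_m, ξ_{m+1}, …, ξ_n` the atoms `a₁, …, a_n`
    are distinct (in particular the head/body atoms are disjoint from the
    epistemic atoms) and that rules are finite objects. -/
def ERule.Wf (r : ERule α) : Prop :=
  (r.head ∪ r.bpos ∪ r.bneg) ∩ r.exats = ∅ ∧
  r.head ∩ r.bpos = ∅ ∧ r.head ∩ r.bneg = ∅ ∧ r.bpos ∩ r.bneg = ∅ ∧
  r.ats.Finite

/-- `ex-ats(Π)`. -/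
def elpExats (P : Set (ERule α)) : Set α := ⋃ r ∈ P, r.exats

/-- `ats(Π)`. -/
def elpAts (P : Set (ERule α)) : Set α := ⋃ r ∈ P, r.ats

/-- The purely-epistemic part `Π_pe = {r ∈ Π : ax-ats(r) = ∅}` of `Π`. -/
def peParts (P : Set (ERule α)) : Set (ERule α) := { r ∈ P | r.PurelyEpistemic }

/-- All rules of the ELP are well-formed. -/
def WfELP (P : Set (ERule α)) : Prop := ∀ r ∈ P, r.Wf

/-- A world view interpretation (WVI) over a set `A` of atoms:
    a consistent set of literals over `A`. -/
def IsWVI (A : Set α) (I : Set (Lit α)) : Prop :=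
  (∀ l ∈ I, l.1 ∈ A) ∧ ∀ a : α, ¬ ((a, true) ∈ I ∧ (a, false) ∈ I)

/-- The restriction `I|X` of a set of literals `I` to literals over atoms in `X`. -/
def restrict (I : Set (Lit α)) (X : Set α) : Set (Lit α) := { l ∈ I | l.1 ∈ X }

/-- The epistemic reduct `Π^I`: each epistemic literal `not ℓ` is replaced by `⊥`
    if `ℓ ∈ I` and by `⊤` otherwise.  A rule survives (with its epistemic literals
    deleted) iff no body occurrence becomes `⊥`, i.e. iff `ℓ ∉ I` for every positive
    epistemic literal `not ℓ` and `ℓ ∈ I` for every epistemic literal `not ℓ`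
    occurring under classical negation `¬`. -/
def ereduct (P : Set (ERule α)) (I : Set (Lit α)) : Set (PRule α) :=
  { r' | ∃ r ∈ P, (∀ l ∈ r.epos, l ∉ I) ∧ (∀ l ∈ r.eneg, l ∈ I) ∧
         r' = ⟨r.head, r.bpos, r.bneg⟩ }

/-- `I ⊨_p Π`: the WVI `I` is plausible for `Π`, i.e. `AS(Π_pe^I) ≠ ∅`. -/
def PlausibleFor (P : Set (ERule α)) (I : Set (Lit α)) : Prop :=
  (answerSets (ereduct (peParts P) I)).Nonempty

/-- Compatibility of a WVI `I` over `A` with a set `Js` of interpretations. -/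
def Compatible (A : Set α) (I : Set (Lit α)) (Js : Set (Set α)) : Prop :=
  Js.Nonempty ∧
  (∀ a : α, (a, true) ∈ I → ∀ J ∈ Js, a ∈ J) ∧
  (∀ a : α, (a, false) ∈ I → ∀ J ∈ Js, a ∉ J) ∧
  (∀ a ∈ A, (a, true) ∉ I → (a, false) ∉ I →
    (∃ J ∈ Js, a ∈ J) ∧ ∃ J' ∈ Js, a ∉ J')

/-- `W` is a world view of `Π`: a WVI over `ats(Π)` compatible with `AS(Π^W)`. -/
def IsWorldView (P : Set (ERule α)) (W : Set (Lit α)) : Prop :=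
  IsWVI (elpAts P) W ∧ Compatible (elpAts P) W (answerSets (ereduct P W))

/-! A well-formed purely-epistemic rule has no objective atoms at all, so if it survives the
epistemic reduct it becomes the constraint `⊥ ←`, which no interpretation satisfies. Hence `I` is
plausible for `Π` exactly when no rule of `Π_pe` survives the reduct under `I`, a condition
checked rule by rule and therefore compatible with unions. -/

theorem ERule.Wf.objective_atoms_eq_empty {r : ERule α} (hwf : r.Wf) (hpe : r.PurelyEpistemic) :
    r.head ∪ r.bpos ∪ r.bneg = ∅ := by
  have hsub : r.head ∪ r.bpos ∪ r.bneg ⊆ r.exats :=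
    Set.subset_union_left.trans (Set.sdiff_eq_empty.mp hpe)
  rw [← Set.inter_eq_left.mpr hsub]
  exact hwf.1

theorem WfELP.union {P1 P2 : Set (ERule α)} (hwf1 : WfELP P1) (hwf2 : WfELP P2) :
    WfELP (P1 ∪ P2) :=
  fun r hr => hr.elim (hwf1 r) (hwf2 r)

theorem eq_empty_rule_of_mem_ereduct_peParts {P : Set (ERule α)} (hwf : WfELP P)
    {I : Set (Lit α)} {r' : PRule α} (hr' : r' ∈ ereduct (peParts P) I) :
    r' = ⟨∅, ∅, ∅⟩ := by
  obtain ⟨r, ⟨hrP, hpe⟩, -, -, rfl⟩ := hr'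
  obtain ⟨⟨hhead, hbpos⟩, hbneg⟩ := by
    simpa only [Set.union_empty_iff] using (hwf r hrP).objective_atoms_eq_empty hpe
  rw [hhead, hbpos, hbneg]

theorem PRule.not_satBy_empty (I : Set α) : ¬ (⟨∅, ∅, ∅⟩ : PRule α).SatBy I := by
  simp [PRule.SatBy]

theorem answerSets_eq_empty_of_empty_rule_mem {P : Set (PRule α)} (h : ⟨∅, ∅, ∅⟩ ∈ P) :
    answerSets P = ∅ :=
  Set.eq_empty_of_forall_notMem fun J hJ =>
    PRule.not_satBy_empty J (hJ.1 _ ⟨_, h, Set.empty_inter J, rfl⟩)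

theorem empty_mem_answerSets_empty : (∅ : Set α) ∈ answerSets (∅ : Set (PRule α)) :=
  ⟨fun _ ⟨_, hr, _⟩ => absurd hr (Set.notMem_empty _),
    fun _ hJ _ => Set.subset_empty_iff.mp hJ⟩

theorem plausibleFor_iff_ereduct_peParts_eq_empty {P : Set (ERule α)} (hwf : WfELP P)
    (I : Set (Lit α)) : PlausibleFor P I ↔ ereduct (peParts P) I = ∅ := by
  refine ⟨fun hplaus => ?_, fun h => ⟨∅, h ▸ empty_mem_answerSets_empty⟩⟩
  by_contra hne
  obtain ⟨r', hr'⟩ := Set.nonempty_iff_ne_empty.mpr hne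
  have hempty := answerSets_eq_empty_of_empty_rule_mem
    (eq_empty_rule_of_mem_ereduct_peParts hwf hr' ▸ hr')
  exact hplaus.ne_empty hempty

theorem peParts_union (P1 P2 : Set (ERule α)) :
    peParts (P1 ∪ P2) = peParts P1 ∪ peParts P2 :=
  Set.sep_union

theorem ereduct_union (Q1 Q2 : Set (ERule α)) (I : Set (Lit α)) :
    ereduct (Q1 ∪ Q2) I = ereduct Q1 I ∪ ereduct Q2 I := by
  ext r'
  simp only [ereduct, Set.mem_union, Set.mem_ofPred_eq, or_and_right, exists_or]

theorem plausible_union_iff_general (P1 P2 : Set (ERule α))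
    (hwf1 : WfELP P1) (hwf2 : WfELP P2)
    (I : Set (Lit α)) :
    PlausibleFor (P1 ∪ P2) I ↔ PlausibleFor P1 I ∧ PlausibleFor P2 I := by
  rw [plausibleFor_iff_ereduct_peParts_eq_empty (hwf1.union hwf2),
    plausibleFor_iff_ereduct_peParts_eq_empty hwf1, plausibleFor_iff_ereduct_peParts_eq_empty hwf2,
    peParts_union, ereduct_union, Set.union_empty_iff]

/-- Plausibility is modular with respect to union:
    `I ⊨_p (Π₁ ∪ Π₂)` iff `I ⊨_p Π₁` and `I ⊨_p Π₂`. -/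
theorem plausible_union_iff (P1 P2 : Set (ERule α))
    (hwf1 : WfELP P1) (hwf2 : WfELP P2)
    (A : Set α) (hA : elpExats P1 ∪ elpExats P2 ⊆ A)
    (I : Set (Lit α)) (hI : IsWVI A I) :
    PlausibleFor (P1 ∪ P2) I ↔ PlausibleFor P1 I ∧ PlausibleFor P2 I :=
  plausible_union_iff_general P1 P2 hwf1 hwf2 I

end ELP
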